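/- arXiv:0906.5419 — 2 statements merged into one kernel-verified Lean document; each statement's English description precedes it below -/
import Mathlib

section
/- For two-state discrimination (N = 2) of distinct states s_1, s_2 with priors p_1, p_2 > 0: if ((p̃_i, s_i; 1−p̃_i, t_i))_{i=1,2} is a weak Helstrom family and the conjugate states t_1, t_2 are distinguishable (there is a continuous affine functional ẽ: S̃ → [0,1] with ẽ(t_1) = 1 and ẽ(t_2) = 0), then the family is a Helstrom family and (1−e, e) is an optimal observable, where e is the restriction of ẽ to S. -/
/-- An affine functional on a convex subset `A` of a real vector space. -/
def IsAffineOn {E : Type*} [AddCommGroup E] [Module ℝ E] (A : Set E) (f : E → ℝ) : Prop :=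
  ∀ x ∈ A, ∀ y ∈ A, ∀ l : ℝ, 0 ≤ l → l ≤ 1 →
    f (l • x + (1 - l) • y) = l * f x + (1 - l) * f y

/-- A virtual effect: a continuous affine functional on `A` with values in `[0,1]`. -/
def IsVirtualEffect {E : Type*} [AddCommGroup E] [Module ℝ E] [TopologicalSpace E]
    (A : Set E) (f : E → ℝ) : Prop :=
  ContinuousOn f A ∧ IsAffineOn A f ∧ ∀ x ∈ A, f x ∈ Set.Icc (0 : ℝ) 1

/-- An `N`-valued observable on `A`: a tuple of effects summing to `1` on `A`. -/
def IsObservableOn {E : Type*} [AddCommGroup E] [Module ℝ E] (A : Set E) {N : ℕ}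
    (e : Fin N → E → ℝ) : Prop :=
  (∀ i, IsAffineOn A (e i) ∧ ∀ x ∈ A, e i x ∈ Set.Icc (0 : ℝ) 1) ∧
    ∀ x ∈ A, (∑ i, e i x) = 1


/-!
Every effect on `S` extends to a virtual effect on `S̃ = closure S`: an affine function on a
convex set agrees there with a linear functional plus a constant, a bounded linear functional
on `V` is continuous by hypothesis, and it extends by continuity from the dense subspace `V`
to `X`.

For virtual effects with `F₁ + F₂ = 1`, the mixture identities
`ρ Fᵢ(s) = pᵢ Fᵢ(sᵢ) + (ρ - pᵢ) Fᵢ(tᵢ)` together with `Fᵢ(tᵢ) ≥ 0` bound the success probability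
by `ρ (F₁ + F₂)(s) = ρ`. For `(1 - g, g)` the conjugate terms vanish because `g t₁ = 1` and
`g t₂ = 0`, so the bound is attained.
-/

open Set

theorem ConvexCone.exists_sub_eq_of_mem_span {M : Type*} [AddCommGroup M] [Module ℝ M]
    {C : ConvexCone ℝ M} (hC : C.Pointed) {x : M} (hx : x ∈ Submodule.span ℝ (C : Set M)) :
    ∃ y ∈ C, ∃ z ∈ C, y - z = x := by
  induction hx using Submodule.span_induction with
  | mem x hx => exact ⟨x, hx, 0, hC, sub_zero x⟩
  | zero => exact ⟨0, hC, 0, hC, sub_zero 0⟩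
  | add _ _ _ _ hx hy =>
    obtain ⟨y₁, hy₁, z₁, hz₁, rfl⟩ := hx
    obtain ⟨y₂, hy₂, z₂, hz₂, rfl⟩ := hy
    exact ⟨y₁ + y₂, C.add_mem hy₁ hy₂, z₁ + z₂, C.add_mem hz₁ hz₂, add_sub_add_comm ..⟩
  | smul r _ _ hx =>
    obtain ⟨y, hy, z, hz, rfl⟩ := hx
    rcases lt_trichotomy r 0 with hr | rfl | hr
    · exact ⟨(-r) • z, C.smul_mem (neg_pos.2 hr) hz, (-r) • y, C.smul_mem (neg_pos.2 hr) hy,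
        by rw [neg_smul, neg_smul, neg_sub_neg, smul_sub]⟩
    · exact ⟨0, hC, 0, hC, by rw [zero_smul, sub_zero]⟩
    · exact ⟨r • y, C.smul_mem hr hy, r • z, C.smul_mem hr hz, (smul_sub r y z).symm⟩

namespace IsAffineOn

variable {E : Type*} [AddCommGroup E] [Module ℝ E] {S : Set E} {f : E → ℝ}

theorem apply_smul (hf : IsAffineOn S f) (h0 : 0 ∈ S) (hf0 : f 0 = 0) {x : E} (hx : x ∈ S)
    {c : ℝ} (hc0 : 0 ≤ c) (hc1 : c ≤ 1) : f (c • x) = c * f x := by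
  simpa [hf0] using hf x hx 0 h0 c hc0 hc1

theorem mul_apply_eq_of_smul_eq (hf : IsAffineOn S f) (h0 : 0 ∈ S) (hf0 : f 0 = 0) {x y : E}
    (hx : x ∈ S) (hy : y ∈ S) {a b : ℝ} (ha : 0 < a) (hb : 0 < b) (h : a • x = b • y) :
    a * f x = b * f y := by
  wlog hab : a ≤ b generalizing a b x y
  · exact (this hy hx hb ha h.symm (le_of_not_ge hab)).symm
  have hy' : y = (a / b) • x := by
    rw [div_eq_inv_mul, ← smul_smul, h, smul_smul, inv_mul_cancel₀ hb.ne', one_smul]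
  rw [hy', hf.apply_smul h0 hf0 hx (by positivity) ((div_le_one hb).2 hab)]
  field_simp

theorem convex_graphOn (hf : IsAffineOn S f) (hS : Convex ℝ S) : Convex ℝ (S.graphOn f) := by
  rintro _ ⟨x, hx, rfl⟩ _ ⟨y, hy, rfl⟩ a b ha hb hab
  obtain rfl : b = 1 - a := by linarith
  refine ⟨a • x + (1 - a) • y, hS hx hy ha hb hab, ?_⟩
  simp [hf x hx y hy a ha (by linarith)]

theorem exists_linearMap_eqOn (hf : IsAffineOn S f) (hS : Convex ℝ S) (h0 : 0 ∈ S)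
    (hf0 : f 0 = 0) : ∃ ℓ : E →ₗ[ℝ] ℝ, EqOn ℓ f S := by
  -- The cone over the graph of `f` is again a graph, hence so is its span `K - K`.
  set K := ConvexCone.hull ℝ (S.graphOn f)
  have hK : K.Pointed := ConvexCone.subset_hull ⟨0, h0, by simp [hf0]⟩
  have hKgraph : ∀ p ∈ K, ∀ q ∈ K, p.1 = q.1 → p.2 = q.2 := by
    rintro _ hp _ hq hpq
    have hG := hf.convex_graphOn hS
    obtain ⟨a, ha, _, ⟨x, hx, rfl⟩, rfl⟩ := (ConvexCone.mem_hull_of_convex hG).1 hp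
    obtain ⟨b, hb, _, ⟨y, hy, rfl⟩, rfl⟩ := (ConvexCone.mem_hull_of_convex hG).1 hq
    simpa using hf.mul_apply_eq_of_smul_eq h0 hf0 hx hy ha hb (by simpa using hpq)
  set W := Submodule.span ℝ (K : Set (E × ℝ))
  have hW : ∀ p ∈ W, p.1 = 0 → p.2 = 0 := by
    intro p hp hp1
    obtain ⟨q, hq, q', hq', rfl⟩ := ConvexCone.exists_sub_eq_of_mem_span hK hp
    simpa [sub_eq_zero] using hKgraph q hq q' hq' (by simpa [sub_eq_zero] using hp1)
  obtain ⟨ℓ, hℓ⟩ := W.toLinearPMap.toFun.exists_extend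
  refine ⟨ℓ, fun x hx => ?_⟩
  have hxW : (x, f x) ∈ W.toLinearPMap.graph := by
    rw [Submodule.toLinearPMap_graph_eq _ hW]
    exact Submodule.subset_span (ConvexCone.subset_hull ⟨x, hx, rfl⟩)
  obtain ⟨y, hyx, hyf⟩ := (LinearPMap.mem_graph_iff _).1 hxW
  rw [← show W.toLinearPMap y = f x from hyf, ← show (y : E) = x from hyx]
  exact LinearMap.congr_fun hℓ y

theorem exists_linearMap_add_const (hf : IsAffineOn S f) (hS : Convex ℝ S) :
    ∃ ℓ : E →ₗ[ℝ] ℝ, ∃ c : ℝ, ∀ x ∈ S, f x = ℓ x + c := by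
  rcases S.eq_empty_or_nonempty with rfl | ⟨x₀, hx₀⟩
  · exact ⟨0, 0, by simp⟩
  have hg : IsAffineOn ((x₀ + ·) ⁻¹' S) (fun x => f (x₀ + x) - f x₀) := by
    intro x hx y hy l hl0 hl1
    have hxy : x₀ + (l • x + (1 - l) • y) = l • (x₀ + x) + (1 - l) • (x₀ + y) := by
      module
    simp only [hxy, hf _ hx _ hy l hl0 hl1]
    ring
  obtain ⟨ℓ, hℓ⟩ := hg.exists_linearMap_eqOn (hS.translate_preimage_right x₀) (by simpa)
    (by simp)
  refine ⟨ℓ, f x₀ - ℓ x₀, fun x hx => ?_⟩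
  have := hℓ (show x₀ + (x - x₀) ∈ S by simpa)
  simp only [map_sub, add_sub_cancel] at this
  linarith

theorem comp_linearMap {F : Type*} [AddCommGroup F] [Module ℝ F] {T : Set F} {g : F → ℝ}
    (hg : IsAffineOn T g) (L : E →ₗ[ℝ] F) : IsAffineOn (L ⁻¹' T) (g ∘ L) := by
  intro x hx y hy l hl0 hl1
  simpa using hg _ hx _ hy l hl0 hl1

theorem congr (hf : IsAffineOn S f) (hS : Convex ℝ S) {g : E → ℝ} (hfg : EqOn f g S) :
    IsAffineOn S g := by
  intro x hx y hy l hl0 hl1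
  rw [← hfg hx, ← hfg hy, ← hfg (hS hx hy hl0 (by linarith) (by ring))]
  exact hf x hx y hy l hl0 hl1

theorem closure_of_continuous [TopologicalSpace E] [ContinuousAdd E] [ContinuousConstSMul ℝ E]
    (hf : IsAffineOn S f) (hfc : Continuous f) : IsAffineOn (closure S) f := by
  intro x hx y hy l hl0 hl1
  have hmix : Continuous fun p : E × E => l • p.1 + (1 - l) • p.2 := by fun_prop
  have hxy : (x, y) ∈ closure (S ×ˢ S) := by
    rw [closure_prod_eq]
    exact ⟨hx, hy⟩
  refine EqOn.closure (f := fun p : E × E => f (l • p.1 + (1 - l) • p.2))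
    (g := fun p => l * f p.1 + (1 - l) * f p.2) ?_ (hfc.comp hmix) (by fun_prop) hxy
  rintro ⟨x, y⟩ ⟨hx, hy⟩
  exact hf x hx y hy l hl0 hl1

theorem mul_apply_eq_of_mixture (hf : IsAffineOn S f) {s t r : E} (hs : s ∈ S) (ht : t ∈ S)
    {p ρ : ℝ} (hp : 0 ≤ p) (hpρ : p ≤ ρ) (hr : (p / ρ) • s + (1 - p / ρ) • t = r) :
    ρ * f r = p * f s + (ρ - p) * f t := by
  have hρ : 0 ≤ ρ := hp.trans hpρ
  rw [← hr, hf s hs t ht _ (div_nonneg hp hρ) (div_le_one_of_le₀ hpρ hρ)]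
  rcases hρ.eq_or_lt with rfl | hρ
  · simp [le_antisymm hpρ hp]
  · field_simp

end IsAffineOn

theorem AddMonoidHom.exists_continuous_extend_of_dense {X : Type*} [AddCommGroup X]
    [TopologicalSpace X] [IsTopologicalAddGroup X] {V : AddSubgroup X} (hV : Dense (V : Set X))
    (ℓ : V →+ ℝ) (hℓ : Continuous ℓ) : ∃ F : X → ℝ, Continuous F ∧ ∀ v : V, F v = ℓ v := by
  let : UniformSpace X := IsTopologicalAddGroup.rightUniformSpace X
  have : IsUniformAddGroup X := isUniformAddGroup_of_addCommGroup
  have hV' : IsUniformInducing ((↑) : V → X) := isUniformEmbedding_subtype_val.isUniformInducing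
  have : IsUniformAddGroup V := hV'.isUniformAddGroup V.subtype
  have hℓ' : UniformContinuous ℓ := uniformContinuous_addMonoidHom_of_continuous hℓ
  exact ⟨_, (uniformContinuous_uniformly_extend hV' hV.denseRange_val hℓ').continuous,
    uniformly_extend_of_ind hV' hV.denseRange_val hℓ'⟩

section Extension

variable {X : Type*} [AddCommGroup X] [Module ℝ X] [TopologicalSpace X] [IsTopologicalAddGroup X]
  {S : Set X} (V : Submodule ℝ X) (hSV : S ⊆ (V : Set X)) (hVdense : Dense (V : Set X))
  (hVcont : ∀ f : V →ₗ[ℝ] ℝ,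
    Bornology.IsBounded (f '' (((↑) : V → X) ⁻¹' S)) → Continuous f)
include hSV hVdense hVcont

theorem IsAffineOn.exists_continuous_eqOn {f : X → ℝ} (hf : IsAffineOn S f) (hS : Convex ℝ S)
    (hbdd : Bornology.IsBounded (f '' S)) : ∃ F : X → ℝ, Continuous F ∧ EqOn F f S := by
  obtain ⟨ℓ, c, hℓ⟩ :=
    (hf.comp_linearMap V.subtype).exists_linearMap_add_const (hS.linear_preimage V.subtype)
  have hℓbdd : Bornology.IsBounded (ℓ '' (((↑) : V → X) ⁻¹' S)) := by
    obtain ⟨C, hC⟩ := isBounded_iff_forall_norm_le.1 hbdd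
    refine isBounded_iff_forall_norm_le.2 ⟨C + |c|, ?_⟩
    rintro _ ⟨v, hv, rfl⟩
    have hfv := hC _ (mem_image_of_mem f hv)
    rw [show f v = ℓ v + c from hℓ v hv] at hfv
    simp only [Real.norm_eq_abs, abs_le] at hfv ⊢
    constructor <;> linarith [neg_abs_le c, le_abs_self c]
  obtain ⟨L, hL, hLℓ⟩ := AddMonoidHom.exists_continuous_extend_of_dense (V := V.toAddSubgroup)
    hVdense ℓ.toAddMonoidHom (hVcont ℓ hℓbdd)
  refine ⟨fun x => L x + c, hL.add continuous_const, fun x hx => ?_⟩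
  simpa [hLℓ ⟨x, hSV hx⟩] using (hℓ ⟨x, hSV hx⟩ hx).symm

theorem IsAffineOn.exists_isVirtualEffect_closure_eqOn [ContinuousSMul ℝ X] {f : X → ℝ}
    (hf : IsAffineOn S f) (hS : Convex ℝ S) (hf01 : ∀ x ∈ S, f x ∈ Icc (0 : ℝ) 1) :
    ∃ F : X → ℝ, IsVirtualEffect (closure S) F ∧ EqOn F f S := by
  obtain ⟨F, hF, hFf⟩ := hf.exists_continuous_eqOn V hSV hVdense hVcont hS
    ((Metric.isBounded_Icc 0 1).subset (image_subset_iff.2 hf01))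
  have hFS : MapsTo F S (Icc 0 1) := fun x hx => hFf hx ▸ hf01 x hx
  refine ⟨F, ⟨hF.continuousOn, (hf.congr hS hFf.symm).closure_of_continuous hF, ?_⟩, hFf⟩
  rw [← closure_Icc (0 : ℝ) 1]
  exact hFS.closure hF

end Extension

theorem successProbability_le_of_mixture {E : Type*} [AddCommGroup E] [Module ℝ E] {A : Set E}
    {e₁ e₂ : E → ℝ} (he₁ : IsAffineOn A e₁) (he₂ : IsAffineOn A e₂) {s₁ s₂ t₁ t₂ r : E}
    (hs₁ : s₁ ∈ A) (hs₂ : s₂ ∈ A) (ht₁ : t₁ ∈ A) (ht₂ : t₂ ∈ A) (he₁t : 0 ≤ e₁ t₁)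
    (he₂t : 0 ≤ e₂ t₂) (hr : e₁ r + e₂ r = 1) {p₁ p₂ ρ : ℝ} (hp₁ : 0 ≤ p₁) (hp₂ : 0 ≤ p₂)
    (hρ₁ : p₁ ≤ ρ) (hρ₂ : p₂ ≤ ρ) (hmix₁ : (p₁ / ρ) • s₁ + (1 - p₁ / ρ) • t₁ = r)
    (hmix₂ : (p₂ / ρ) • s₂ + (1 - p₂ / ρ) • t₂ = r) :
    p₁ * e₁ s₁ + p₂ * e₂ s₂ ≤ ρ :=
  calc p₁ * e₁ s₁ + p₂ * e₂ s₂ ≤ ρ * e₁ r + ρ * e₂ r := by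
        rw [he₁.mul_apply_eq_of_mixture hs₁ ht₁ hp₁ hρ₁ hmix₁,
          he₂.mul_apply_eq_of_mixture hs₂ ht₂ hp₂ hρ₂ hmix₂]
        nlinarith [mul_nonneg (sub_nonneg.2 hρ₁) he₁t, mul_nonneg (sub_nonneg.2 hρ₂) he₂t]
    _ = ρ := by rw [← mul_add, hr, mul_one]

theorem two_state_distinguishable_helstrom_general {X : Type*} [AddCommGroup X] [Module ℝ X]
    [TopologicalSpace X] [IsTopologicalAddGroup X] [ContinuousSMul ℝ X]
    (S Stilde : Set X) (hS : Convex ℝ S)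
    (hcl : closure S = Stilde)
    (V : Submodule ℝ X) (hSV : S ⊆ (V : Set X)) (hVdense : Dense (V : Set X))
    (hVcont : ∀ f : V →ₗ[ℝ] ℝ,
      Bornology.IsBounded (f '' (((↑) : V → X) ⁻¹' S)) → Continuous f)
    (s1 s2 : X) (hs1 : s1 ∈ S) (hs2 : s2 ∈ S)
    (p1 p2 : ℝ) (hp1 : 0 < p1) (hp2 : 0 < p2)
    (ρ : ℝ) (hρ1 : p1 ≤ ρ) (hρ2 : p2 ≤ ρ)
    (t1 t2 sref : X) (ht1 : t1 ∈ Stilde) (ht2 : t2 ∈ Stilde) (hsref : sref ∈ Stilde)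
    (hfam1 : (p1 / ρ) • s1 + (1 - p1 / ρ) • t1 = sref)
    (hfam2 : (p2 / ρ) • s2 + (1 - p2 / ρ) • t2 = sref)
    (g : X → ℝ) (hg : IsVirtualEffect Stilde g) (hg1 : g t1 = 1) (hg2 : g t2 = 0) :
    p1 * (1 - g s1) + p2 * g s2 = ρ ∧
      ∀ e1 e2 : X → ℝ, IsAffineOn S e1 → (∀ x ∈ S, e1 x ∈ Set.Icc (0 : ℝ) 1) →
        IsAffineOn S e2 → (∀ x ∈ S, e2 x ∈ Set.Icc (0 : ℝ) 1) →
        (∀ x ∈ S, e1 x + e2 x = 1) →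
        p1 * e1 s1 + p2 * e2 s2 ≤ ρ := by
  subst hcl
  refine ⟨?_, fun e1 e2 he1 he1' he2 he2' hsum => ?_⟩
  · have h1 := hg.2.1.mul_apply_eq_of_mixture (subset_closure hs1) ht1 hp1.le hρ1 hfam1
    have h2 := hg.2.1.mul_apply_eq_of_mixture (subset_closure hs2) ht2 hp2.le hρ2 hfam2
    rw [hg1] at h1
    rw [hg2] at h2
    linarith
  obtain ⟨F1, ⟨hF1c, hF1, hF1I⟩, hF1e⟩ :=
    he1.exists_isVirtualEffect_closure_eqOn V hSV hVdense hVcont hS he1'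
  obtain ⟨F2, ⟨hF2c, hF2, hF2I⟩, hF2e⟩ :=
    he2.exists_isVirtualEffect_closure_eqOn V hSV hVdense hVcont hS he2'
  have hFsum : EqOn (F1 + F2) 1 (closure S) :=
    EqOn.of_subset_closure (fun x hx => (hF1e hx ▸ hF2e hx ▸ hsum x hx :))
      (hF1c.add hF2c) continuousOn_const subset_closure subset_rfl
  rw [← hF1e hs1, ← hF2e hs2]
  exact successProbability_le_of_mixture hF1 hF2 (subset_closure hs1) (subset_closure hs2) ht1 ht2
    (hF1I t1 ht1).1 (hF2I t2 ht2).1 (hFsum hsref) hp1.le hp2.le hρ1 hρ2 hfam1 hfam2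

/-- Two-state discrimination: if the conjugate states `t1, t2` of a weak Helstrom family
are distinguishable by a virtual effect `g` (continuous affine, `[0,1]`-valued on `S̃`,
`g t1 = 1`, `g t2 = 0`), then the family is a Helstrom family and the two-valued
observable `(1 − e, e)` with `e = g|_S` is optimal. -/
theorem two_state_distinguishable_helstrom {X : Type*} [AddCommGroup X] [Module ℝ X]
    [TopologicalSpace X] [IsTopologicalAddGroup X] [ContinuousSMul ℝ X]
    [LocallyConvexSpace ℝ X] [T2Space X]
    (S Stilde : Set X) (hS : Convex ℝ S) (hSt : Convex ℝ Stilde)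
    (hcomp : IsCompact Stilde) (hcl : closure S = Stilde)
    (V : Submodule ℝ X) (hSV : S ⊆ (V : Set X)) (hVdense : Dense (V : Set X))
    (hVcont : ∀ f : V →ₗ[ℝ] ℝ,
      Bornology.IsBounded (f '' (((↑) : V → X) ⁻¹' S)) → Continuous f)
    (s1 s2 : X) (hs1 : s1 ∈ S) (hs2 : s2 ∈ S) (hne : s1 ≠ s2)
    (p1 p2 : ℝ) (hp1 : 0 < p1) (hp2 : 0 < p2) (hpsum : p1 + p2 = 1)
    (ρ : ℝ) (hρ1 : p1 ≤ ρ) (hρ2 : p2 ≤ ρ)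
    (t1 t2 sref : X) (ht1 : t1 ∈ Stilde) (ht2 : t2 ∈ Stilde) (hsref : sref ∈ Stilde)
    (hfam1 : (p1 / ρ) • s1 + (1 - p1 / ρ) • t1 = sref)
    (hfam2 : (p2 / ρ) • s2 + (1 - p2 / ρ) • t2 = sref)
    (g : X → ℝ) (hg : IsVirtualEffect Stilde g) (hg1 : g t1 = 1) (hg2 : g t2 = 0) :
    p1 * (1 - g s1) + p2 * g s2 = ρ ∧
      ∀ e1 e2 : X → ℝ, IsAffineOn S e1 → (∀ x ∈ S, e1 x ∈ Set.Icc (0 : ℝ) 1) →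
        IsAffineOn S e2 → (∀ x ∈ S, e2 x ∈ Set.Icc (0 : ℝ) 1) →
        (∀ x ∈ S, e1 x + e2 x = 1) →
        p1 * e1 s1 + p2 * e2 s2 ≤ ρ :=
  two_state_distinguishable_helstrom_general S Stilde hS hcl V hSV hVdense hVcont s1 s2 hs1 hs2 p1
    p2 hp1 hp2 ρ hρ1 hρ2 t1 t2 sref ht1 ht2 hsref hfam1 hfam2 g hg hg1 hg2
end

section
/- For two distinct states s'_1, s'_2 in a state space S of a general probabilistic theory, the Gudder distance d(s'_1, s'_2), defined as the infimum of λ ∈ (0, 1/2] such that λt_1 + (1−λ)s'_1 = λt_2 + (1−λ)s'_2 for some t_1, t_2 ∈ S̃, satisfies d(s'_1, s'_2) = 1 − 1/(2 P_succ(s'_1, s'_2)), where P_succ(s'_1, s'_2) is the optimal success probability for discriminating s'_1, s'_2 with equal priors 1/2. -/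
open Pointwise

section AffineExtension

variable {X : Type*} [AddCommGroup X] [Module ℝ X] {S : Set X} {e : X → ℝ}

lemma IsAffineOn.add_mul_eq_of_add_smul_eq (he : IsAffineOn S e) {x y z : X} (hx : x ∈ S)
    (hy : y ∈ S) {p q : ℝ} (hp : 0 ≤ p) (hq : 0 ≤ q) (h : (p + q) • z = p • x + q • y) :
    (p + q) * e z = p * e x + q * e y := by
  rcases (add_nonneg hp hq).eq_or_lt with hpq | hpq
  · obtain ⟨rfl, rfl⟩ := (add_eq_zero_iff_of_nonneg hp hq).1 hpq.symm
    simp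
  have hz : z = (p / (p + q)) • x + (1 - p / (p + q)) • y := by
    rw [← inv_smul_smul₀ hpq.ne' z, h]
    match_scalars <;> field
  rw [hz, he x hx y hy _ (by positivity) (div_le_one_of_le₀ (by linarith) hpq.le)]
  field_simp
  ring

lemma IsAffineOn.mul_sub_eq_of_smul_sub_eq (hS : Convex ℝ S) (he : IsAffineOn S e)
    {x y x' y' : X} (hx : x ∈ S) (hy : y ∈ S) (hx' : x' ∈ S) (hy' : y' ∈ S) {r r' : ℝ}
    (hr : 0 ≤ r) (hr' : 0 ≤ r') (h : r • (x - y) = r' • (x' - y')) :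
    r * (e x - e y) = r' * (e x' - e y') := by
  obtain ⟨z, hz, hzxy⟩ := hS.exists_mem_add_smul_eq hx hy' hr hr'
  have hzyx : (r' + r) • z = r' • x' + r • y := by
    rw [add_comm, hzxy]
    linear_combination (norm := module) h
  have h₁ := he.add_mul_eq_of_add_smul_eq hx hy' hr hr' hzxy
  have h₂ := he.add_mul_eq_of_add_smul_eq hx' hy hr' hr hzyx
  linear_combination h₂ - h₁

variable (S) in
def differenceCone (hS : Convex ℝ S) {s₀ : X} (hs₀ : s₀ ∈ S) : Submodule ℝ X where
  carrier := {v | ∃ r : ℝ, 0 ≤ r ∧ ∃ x ∈ S, ∃ y ∈ S, v = r • (x - y)}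
  zero_mem' := ⟨0, le_rfl, s₀, hs₀, s₀, hs₀, by simp⟩
  add_mem' := by
    rintro _ _ ⟨r₁, hr₁, x₁, hx₁, y₁, hy₁, rfl⟩ ⟨r₂, hr₂, x₂, hx₂, y₂, hy₂, rfl⟩
    obtain ⟨x, hx, hx'⟩ := hS.exists_mem_add_smul_eq hx₁ hx₂ hr₁ hr₂
    obtain ⟨y, hy, hy'⟩ := hS.exists_mem_add_smul_eq hy₁ hy₂ hr₁ hr₂
    refine ⟨r₁ + r₂, add_nonneg hr₁ hr₂, x, hx, y, hy, ?_⟩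
    rw [smul_sub (r₁ + r₂) x y, hx', hy']
    module
  smul_mem' := by
    rintro c _ ⟨r, hr, x, hx, y, hy, rfl⟩
    rcases le_total 0 c with hc | hc
    · exact ⟨c * r, mul_nonneg hc hr, x, hx, y, hy, by rw [smul_smul]⟩
    · refine ⟨-c * r, mul_nonneg (neg_nonneg.2 hc) hr, y, hy, x, hx, ?_⟩
      simp only [smul_smul]
      module

variable (S e) in
/-- `r * (e x - e y)` for some representation `v = r • (x - y)` chosen by `Classical.epsilon`;
junk outside `differenceCone`. -/
noncomputable def differenceLift (v : X) : ℝ :=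
  let p := Classical.epsilon fun p : ℝ × X × X =>
    0 ≤ p.1 ∧ p.2.1 ∈ S ∧ p.2.2 ∈ S ∧ v = p.1 • (p.2.1 - p.2.2)
  p.1 * (e p.2.1 - e p.2.2)

lemma IsAffineOn.differenceLift_smul_sub (hS : Convex ℝ S) (he : IsAffineOn S e) {r : ℝ}
    (hr : 0 ≤ r) {x y : X} (hx : x ∈ S) (hy : y ∈ S) :
    differenceLift S e (r • (x - y)) = r * (e x - e y) := by
  obtain ⟨hr', hx', hy', h⟩ := Classical.epsilon_spec
    (p := fun p : ℝ × X × X => 0 ≤ p.1 ∧ p.2.1 ∈ S ∧ p.2.2 ∈ S ∧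
      r • (x - y) = p.1 • (p.2.1 - p.2.2)) ⟨(r, x, y), hr, hx, hy, rfl⟩
  exact he.mul_sub_eq_of_smul_sub_eq hS hx' hy' hx hy hr' hr h.symm

lemma IsAffineOn.differenceLift_add (hS : Convex ℝ S) (he : IsAffineOn S e) {s₀ : X}
    (hs₀ : s₀ ∈ S) {u v : X} (hu : u ∈ differenceCone S hS hs₀)
    (hv : v ∈ differenceCone S hS hs₀) :
    differenceLift S e (u + v) = differenceLift S e u + differenceLift S e v := by
  obtain ⟨r₁, hr₁, x₁, hx₁, y₁, hy₁, rfl⟩ := hu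
  obtain ⟨r₂, hr₂, x₂, hx₂, y₂, hy₂, rfl⟩ := hv
  obtain ⟨x, hx, hx'⟩ := hS.exists_mem_add_smul_eq hx₁ hx₂ hr₁ hr₂
  obtain ⟨y, hy, hy'⟩ := hS.exists_mem_add_smul_eq hy₁ hy₂ hr₁ hr₂
  have hsum : r₁ • (x₁ - y₁) + r₂ • (x₂ - y₂) = (r₁ + r₂) • (x - y) := by
    rw [smul_sub (r₁ + r₂) x y, hx', hy']
    module
  rw [hsum, he.differenceLift_smul_sub hS (add_nonneg hr₁ hr₂) hx hy,
    he.differenceLift_smul_sub hS hr₁ hx₁ hy₁, he.differenceLift_smul_sub hS hr₂ hx₂ hy₂]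
  linear_combination he.add_mul_eq_of_add_smul_eq hx₁ hx₂ hr₁ hr₂ hx' -
    he.add_mul_eq_of_add_smul_eq hy₁ hy₂ hr₁ hr₂ hy'

lemma IsAffineOn.differenceLift_smul (hS : Convex ℝ S) (he : IsAffineOn S e) {s₀ : X}
    (hs₀ : s₀ ∈ S) (c : ℝ) {u : X} (hu : u ∈ differenceCone S hS hs₀) :
    differenceLift S e (c • u) = c * differenceLift S e u := by
  obtain ⟨r, hr, x, hx, y, hy, rfl⟩ := hu
  rw [he.differenceLift_smul_sub hS hr hx hy]
  rcases le_total 0 c with hc | hc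
  · rw [smul_smul, he.differenceLift_smul_sub hS (mul_nonneg hc hr) hx hy]
    ring
  · rw [show c • r • (x - y) = (-c * r) • (y - x) by module,
      he.differenceLift_smul_sub hS (mul_nonneg (neg_nonneg.2 hc) hr) hy hx]
    ring

theorem IsAffineOn.exists_linearMap_add_const_s16 (hS : Convex ℝ S) (he : IsAffineOn S e) :
    ∃ (g : X →ₗ[ℝ] ℝ) (c : ℝ), ∀ x ∈ S, e x = g x + c := by
  rcases S.eq_empty_or_nonempty with rfl | ⟨s₀, hs₀⟩
  · exact ⟨0, 0, by simp⟩
  let U := differenceCone S hS hs₀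
  let φ : U →ₗ[ℝ] ℝ :=
    { toFun := fun u => differenceLift S e u
      map_add' := fun u v => he.differenceLift_add hS hs₀ u.2 v.2
      map_smul' := fun c u => he.differenceLift_smul hS hs₀ c u.2 }
  obtain ⟨g, hg⟩ := LinearMap.exists_extend φ
  refine ⟨g, e s₀ - g s₀, fun x hx => ?_⟩
  have hmem : x - s₀ ∈ U := ⟨1, zero_le_one, x, hx, s₀, hs₀, (one_smul ℝ _).symm⟩
  have hxs₀ : g (x - s₀) = e x - e s₀ := by
    have h := he.differenceLift_smul_sub hS zero_le_one hx hs₀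
    rw [one_smul, one_mul] at h
    exact (LinearMap.congr_fun hg ⟨x - s₀, hmem⟩).trans h
  rw [map_sub] at hxs₀
  linarith

end AffineExtension

section DistanceRatio

variable {X : Type*} [AddCommGroup X] [Module ℝ X]

lemma exists_smul_add_smul_eq_iff_mem_smul_sub {T : Set X} {s₁ s₂ : X} {l : ℝ} (hl : l < 1) :
    (∃ t₁ ∈ T, ∃ t₂ ∈ T, l • t₁ + (1 - l) • s₁ = l • t₂ + (1 - l) • s₂) ↔
      s₁ - s₂ ∈ (l / (1 - l)) • (T - T) := by
  have hl' : 1 - l ≠ 0 := by linarith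
  simp only [Set.mem_smul_set, Set.mem_sub]
  constructor
  · rintro ⟨t₁, ht₁, t₂, ht₂, h⟩
    refine ⟨t₂ - t₁, ⟨t₂, ht₂, t₁, ht₁, rfl⟩, ?_⟩
    apply smul_right_injective X hl'
    simp only [smul_smul]
    linear_combination (norm := skip) h.symm
    match_scalars <;> field
  · rintro ⟨_, ⟨t₂, ht₂, t₁, ht₁, rfl⟩, h⟩
    refine ⟨t₁, ht₁, t₂, ht₂, ?_⟩
    linear_combination (norm := skip) (1 - l) • h.symm
    match_scalars <;> field

lemma LinearMap.apply_le_of_mem_smul_sub (f : X →ₗ[ℝ] ℝ) (c : ℝ) {T : Set X}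
    (hf : ∀ x ∈ T, f x + c ∈ Set.Icc (0 : ℝ) 1) {ν : ℝ} (hν : 0 ≤ ν) {d : X}
    (hd : d ∈ ν • (T - T)) : f d ≤ ν := by
  obtain ⟨_, ⟨a, ha, b, hb, rfl⟩, rfl⟩ := hd
  have hab : f (a - b) ≤ 1 := by
    rw [map_sub]
    linarith [(hf a ha).2, (hf b hb).1]
  simpa using mul_le_of_le_one_right hν hab

lemma LinearMap.isAffineOn_add_const (f : X →ₗ[ℝ] ℝ) (c : ℝ) (S : Set X) :
    IsAffineOn S (fun x => f x + c) := by
  intro x _ y _ l _ _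
  simp only [map_add, map_smul, smul_eq_mul]
  ring

lemma isLeast_setOf_smul_add_smul_eq {T : Set X} {s₁ s₂ : X} {μ : ℝ} (hμ₀ : 0 < μ)
    (hμ : IsLeast {ν ∈ Set.Icc (0 : ℝ) 1 | s₁ - s₂ ∈ ν • (T - T)} μ) :
    IsLeast {l : ℝ | 0 < l ∧ l ≤ 1 / 2 ∧
      ∃ t₁ ∈ T, ∃ t₂ ∈ T, l • t₁ + (1 - l) • s₁ = l • t₂ + (1 - l) • s₂} (μ / (1 + μ)) := by
  have hμ₁ : μ ≤ 1 := hμ.1.1.2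
  refine ⟨⟨by positivity, by rw [div_le_iff₀ (by positivity)]; linarith, ?_⟩, ?_⟩
  · rw [exists_smul_add_smul_eq_iff_mem_smul_sub (by rw [div_lt_one (by positivity)]; linarith)]
    convert hμ.1.2 using 2
    field_simp
    ring
  · rintro l ⟨hl₀, hl, hlT⟩
    rw [exists_smul_add_smul_eq_iff_mem_smul_sub (by linarith)] at hlT
    have hμl : μ ≤ l / (1 - l) :=
      hμ.2 ⟨⟨div_nonneg hl₀.le (by linarith), by rw [div_le_one (by linarith)]; linarith⟩, hlT⟩
    rw [le_div_iff₀ (by linarith)] at hμl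
    rw [div_le_iff₀ (by positivity)]
    linarith

end DistanceRatio

lemma IsCompact.sub {G : Type*} [AddGroup G] [TopologicalSpace G] [ContinuousSub G]
    {s t : Set G} (hs : IsCompact s) (ht : IsCompact t) : IsCompact (s - t) := by
  rw [← Set.image2_sub, ← Set.image_prod]
  exact (hs.prod ht).image continuous_sub

theorem Submodule.exists_continuousLinearMap_extend_of_dense {X 𝕜 F : Type*} [AddCommGroup X]
    [TopologicalSpace X] [IsTopologicalAddGroup X] [Ring 𝕜]
    [Module 𝕜 X] [ContinuousConstSMul 𝕜 X] [AddCommGroup F] [UniformSpace F]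
    [IsUniformAddGroup F] [T0Space F] [CompleteSpace F] [Module 𝕜 F] [ContinuousConstSMul 𝕜 F]
    (V : Submodule 𝕜 X) (hV : Dense (V : Set X)) (g : V →L[𝕜] F) :
    ∃ G : X →L[𝕜] F, ∀ v : V, G v = g v := by
  let : UniformSpace X := IsTopologicalAddGroup.rightUniformSpace X
  have : IsUniformAddGroup X := isUniformAddGroup_of_addCommGroup
  have : IsUniformAddGroup V := IsUniformAddGroup.comap V.subtype
  exact ⟨g.extend V.subtypeL, g.extend_eq (e := V.subtypeL) hV.denseRange_val
    isUniformEmbedding_subtype_val.isUniformInducing⟩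

section Topology

variable {X : Type*} [AddCommGroup X] [Module ℝ X] [TopologicalSpace X]

lemma IsCompact.setOf_mem_smul [ContinuousSMul ℝ X] [T2Space X] {K : Set X} (hK : IsCompact K)
    (d : X) : IsCompact {ν ∈ Set.Icc (0 : ℝ) 1 | d ∈ ν • K} := by
  have hpairs : IsCompact ((Set.Icc (0 : ℝ) 1 ×ˢ K) ∩ {p | p.1 • p.2 = d}) :=
    (isCompact_Icc.prod hK).inter_right (isClosed_eq (by fun_prop) continuous_const)
  convert hpairs.image continuous_fst using 1
  ext ν
  simp only [Set.mem_ofPred_eq, Set.mem_smul_set, Set.mem_image, Set.mem_inter_iff,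
    Set.mem_prod, Prod.exists]
  constructor
  · rintro ⟨hν, k, hk, rfl⟩
    exact ⟨ν, k, ⟨⟨hν, hk⟩, rfl⟩, rfl⟩
  · rintro ⟨_, k, ⟨⟨hν, hk⟩, rfl⟩, rfl⟩
    exact ⟨hν, k, hk, rfl⟩

lemma exists_pos_isLeast_mem_smul [ContinuousSMul ℝ X] [T2Space X] {K : Set X}
    (hK : IsCompact K) {d : X} (hd : d ∈ K) (hd₀ : d ≠ 0) :
    ∃ μ, 0 < μ ∧ IsLeast {ν ∈ Set.Icc (0 : ℝ) 1 | d ∈ ν • K} μ := by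
  obtain ⟨μ, hμ⟩ := (hK.setOf_mem_smul d).exists_isLeast
    ⟨1, ⟨zero_le_one, le_rfl⟩, by rwa [one_smul]⟩
  refine ⟨μ, hμ.1.1.1.lt_of_ne fun hμ₀ => hd₀ ?_, hμ⟩
  exact Set.zero_smul_set_subset K (hμ₀ ▸ hμ.1.2)

variable [IsTopologicalAddGroup X] {S : Set X} {e : X → ℝ}

theorem IsAffineOn.exists_continuousLinearMap_add_const [ContinuousConstSMul ℝ X]
    (hS : Convex ℝ S) (he : IsAffineOn S e) (hb : Bornology.IsBounded (e '' S))
    (V : Submodule ℝ X) (hSV : S ⊆ V) (hV : Dense (V : Set X))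
    (hVcont : ∀ f : V →ₗ[ℝ] ℝ, Bornology.IsBounded (f '' (((↑) : V → X) ⁻¹' S)) → Continuous f) :
    ∃ (F : X →L[ℝ] ℝ) (c : ℝ), ∀ x ∈ S, e x = F x + c := by
  obtain ⟨g, c, hg⟩ := he.exists_linearMap_add_const_s16 hS
  have hgV : Continuous (g ∘ₗ V.subtype) := by
    refine hVcont _ ((hb.sub (Bornology.isBounded_singleton (x := c))).subset ?_)
    rintro _ ⟨v, hv, rfl⟩
    exact ⟨e v, ⟨v, hv, rfl⟩, c, rfl, by simp [hg v hv]⟩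
  obtain ⟨F, hF⟩ := V.exists_continuousLinearMap_extend_of_dense hV ⟨_, hgV⟩
  exact ⟨F, c, fun x hx => by rw [hg x hx, hF ⟨x, hSV hx⟩]; rfl⟩

theorem IsAffineOn.sub_le_of_mem_smul_sub_closure [ContinuousConstSMul ℝ X]
    (hS : Convex ℝ S) (he : IsAffineOn S e) (he₀₁ : ∀ x ∈ S, e x ∈ Set.Icc (0 : ℝ) 1)
    (V : Submodule ℝ X) (hSV : S ⊆ V) (hV : Dense (V : Set X))
    (hVcont : ∀ f : V →ₗ[ℝ] ℝ, Bornology.IsBounded (f '' (((↑) : V → X) ⁻¹' S)) → Continuous f)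
    {s₁ s₂ : X} (hs₁ : s₁ ∈ S) (hs₂ : s₂ ∈ S) {ν : ℝ} (hν : 0 ≤ ν)
    (hd : s₁ - s₂ ∈ ν • (closure S - closure S)) : e s₁ - e s₂ ≤ ν := by
  obtain ⟨F, c, hF⟩ := he.exists_continuousLinearMap_add_const hS
    ((Metric.isBounded_Icc (0 : ℝ) 1).subset (Set.image_subset_iff.2 he₀₁)) V hSV hV hVcont
  have hFS : closure S ⊆ (fun x => F x + c) ⁻¹' Set.Icc 0 1 :=
    closure_minimal (fun x hx => show F x + c ∈ _ from hF x hx ▸ he₀₁ x hx)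
      (isClosed_Icc.preimage (by fun_prop))
  rw [hF s₁ hs₁, hF s₂ hs₂, add_sub_add_right_eq_sub, ← map_sub]
  exact F.toLinearMap.apply_le_of_mem_smul_sub c hFS hν hd

theorem exists_continuousLinearMap_lt_apply_of_notMem_smul_sub [ContinuousSMul ℝ X]
    [LocallyConvexSpace ℝ X] [T2Space X] {T : Set X} (hT : IsCompact T) (hTc : Convex ℝ T)
    {s₁ s₂ : X} (hs₁ : s₁ ∈ T) (hs₂ : s₂ ∈ T) {ν : ℝ} (h : s₁ - s₂ ∉ ν • (T - T)) :
    ∃ (F : X →L[ℝ] ℝ) (c : ℝ), (∀ x ∈ T, F x + c ∈ Set.Icc (0 : ℝ) 1) ∧ ν < F (s₁ - s₂) := by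
  have hK : IsCompact (T - T) := hT.sub hT
  have hd : s₁ - s₂ ∈ T - T := Set.sub_mem_sub hs₁ hs₂
  obtain ⟨F, u, hFK, hFd⟩ := geometric_hahn_banach_closed_point ((hTc.sub hTc).smul ν)
    (hK.smul ν).isClosed h
  obtain ⟨k₀, hk₀, hmax⟩ := hK.exists_isMaxOn ⟨_, hd⟩ F.continuous.continuousOn
  obtain ⟨t₀, ht₀, hmin⟩ := hT.exists_isMinOn ⟨_, hs₁⟩ F.continuous.continuousOn
  have hu : 0 < u := by
    simpa using hFK 0 ⟨s₁ - s₁, Set.sub_mem_sub hs₁ hs₁, by simp⟩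
  have hνm : ν * F k₀ < u := by
    simpa using hFK (ν • k₀) (Set.smul_mem_smul_set hk₀)
  have hdm : F (s₁ - s₂) ≤ F k₀ := hmax hd
  have hm : 0 < F k₀ := by linarith
  -- Rescale `F` by its maximum on `T - T` and shift it by its minimum on `T`.
  refine ⟨(F k₀)⁻¹ • F, -((F k₀)⁻¹ * F t₀), fun x hx => ?_, ?_⟩
  · have hlow : F t₀ ≤ F x := hmin hx
    have hup : F (x - t₀) ≤ F k₀ := hmax (Set.sub_mem_sub hx ht₀)
    rw [map_sub] at hup
    rw [smul_apply, smul_eq_mul, ← sub_eq_add_neg, ← mul_sub]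
    exact ⟨mul_nonneg (inv_nonneg.2 hm.le) (sub_nonneg.2 hlow), (inv_mul_le_one₀ hm).2 hup⟩
  · rw [smul_apply, smul_eq_mul, ← div_eq_inv_mul, lt_div_iff₀ hm]
    linarith

end Topology

/-- Gudder's distance `d(s1,s2)` (the infimum of `λ ∈ (0,1/2]` such that
`λ t1 + (1−λ) s1 = λ t2 + (1−λ) s2` for some `t1, t2 ∈ S̃`) satisfies
`d(s1,s2) = 1 − 1/(2 P_succ(s1,s2))`, where `P_succ(s1,s2)` is the optimal success
probability for discriminating `s1, s2` with equal priors `1/2`. -/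
theorem gudder_distance_eq {X : Type*} [AddCommGroup X] [Module ℝ X]
    [TopologicalSpace X] [IsTopologicalAddGroup X] [ContinuousSMul ℝ X]
    [LocallyConvexSpace ℝ X] [T2Space X]
    (S Stilde : Set X) (hS : Convex ℝ S) (hSt : Convex ℝ Stilde)
    (hcomp : IsCompact Stilde) (hcl : closure S = Stilde)
    (V : Submodule ℝ X) (hSV : S ⊆ (V : Set X)) (hVdense : Dense (V : Set X))
    (hVcont : ∀ f : V →ₗ[ℝ] ℝ,
      Bornology.IsBounded (f '' (((↑) : V → X) ⁻¹' S)) → Continuous f)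
    (s1 s2 : X) (hs1 : s1 ∈ S) (hs2 : s2 ∈ S) (hne : s1 ≠ s2) :
    sInf {l : ℝ | 0 < l ∧ l ≤ 1 / 2 ∧ ∃ t1 ∈ Stilde, ∃ t2 ∈ Stilde,
        l • t1 + (1 - l) • s1 = l • t2 + (1 - l) • s2}
      = 1 - 1 / (2 * sSup {q : ℝ | ∃ e : X → ℝ, IsAffineOn S e ∧
          (∀ x ∈ S, e x ∈ Set.Icc (0 : ℝ) 1) ∧ q = (1 + e s1 - e s2) / 2}) := by
  subst hcl
  have hs₁ : s1 ∈ closure S := subset_closure hs1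
  have hs₂ : s2 ∈ closure S := subset_closure hs2
  obtain ⟨μ, hμ₀, hμ⟩ := exists_pos_isLeast_mem_smul (hcomp.sub hcomp)
    (Set.sub_mem_sub hs₁ hs₂) (sub_ne_zero.2 hne)
  have hP : IsLUB {q : ℝ | ∃ e : X → ℝ, IsAffineOn S e ∧
      (∀ x ∈ S, e x ∈ Set.Icc (0 : ℝ) 1) ∧ q = (1 + e s1 - e s2) / 2} ((1 + μ) / 2) := by
    refine ⟨?_, fun b hb => le_of_forall_lt fun q hq => ?_⟩
    · rintro _ ⟨e, he, he₀₁, rfl⟩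
      linarith [he.sub_le_of_mem_smul_sub_closure hS he₀₁ V hSV hVdense hVcont hs1 hs2 hμ₀.le
        hμ.1.2]
    · have hν : max (2 * q - 1) 0 < μ := max_lt (by linarith) hμ₀
      obtain ⟨F, c, hF, hlt⟩ := exists_continuousLinearMap_lt_apply_of_notMem_smul_sub hcomp hSt
        hs₁ hs₂ fun h => hν.not_ge (hμ.2 ⟨⟨le_max_right _ _, hν.le.trans hμ.1.1.2⟩, h⟩)
      have hq := hb ⟨fun x => F x + c, F.toLinearMap.isAffineOn_add_const c S,
        fun x hx => hF x (subset_closure hx), rfl⟩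
      rw [map_sub] at hlt
      linarith [le_max_left (2 * q - 1) 0]
  rw [(isLeast_setOf_smul_add_smul_eq hμ₀ hμ).csInf_eq, hP.csSup_eq hP.nonempty]
  field_simp
  ring
end
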